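/- Let a₁, a₂, α₁, α₂, β₁, β₂, γ₁, γ₂, ξ₁, ξ₂, ξ₃, ξ₄ be real numbers with a₁ ≠ 0, a₂ ≠ 0, a₁² ≠ a₂², satisfying the case L2 conditions. Let C, D ∈ ℝ with D ≠ 0 and define the transformed coefficients a₁' = D³a₁, a₂' = D³a₂, α₁' = D²(α₁ + C(a₁+a₂)), α₂' = D²α₂, β₁' = D²(β₁ + C(a₁+a₂)), β₂' = D²β₂, γ₁' = D²(γ₁ + 2Ca₁), γ₂' = D²(γ₂ + 2Ca₂), ξ₁' = Dξ₁ + (1/2)CD[3C(a₁+a₂) + γ₁ + γ₂ + 2(α₁ − α₂ + β₁)], ξ₂' = Dξ₂ + (1/2)CD[3C(a₁+a₂) + γ₁ + γ₂ + 2(α₁ + α₂ + β₁)], ξ₃' = Dξ₃ + (1/2)CD[C(a₁−a₂) + γ₁ − γ₂ + 2β₂], ξ₄' = Dξ₄ + (1/2)CD[C(a₁−a₂) + γ₁ − γ₂ − 2β₂]. Then the primed coefficients again satisfy the case L2 conditions. Thus the subclass L2 is invariant under restricted Möbius transformations u ↦ u/(Cu+D). -/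
import Mathlib


/-- The case L2 linearizability conditions for the quad-equation `Q₊`. -/
def CaseL2 (a₁ a₂ α₁ α₂ β₁ β₂ γ₁ γ₂ ξ₁ ξ₂ ξ₃ ξ₄ : ℝ) : Prop :=
  α₂ = 0 ∧ β₂ = 0 ∧ α₁ = β₁ ∧
  (3 * a₁ - 2 * a₂) * a₂ ^ 2 * γ₁ + a₁ ^ 2 * (2 * a₁ - 3 * a₂) * γ₂ =
    4 * a₁ * (a₁ - a₂) * a₂ * β₁ ∧
  ξ₁ = ξ₂ ∧
  ξ₁ = ((a₁ + a₂) * (a₂ ^ 2 * γ₁ ^ 2 - a₁ ^ 2 * γ₂ ^ 2) +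
      2 * a₂ * (a₁ ^ 2 - 2 * a₂ ^ 2) * γ₁ * β₁ +
      2 * a₁ * (2 * a₁ ^ 2 - a₂ ^ 2) * γ₂ * β₁ -
      6 * a₁ * (a₁ - a₂) * a₂ * β₁ ^ 2) / (4 * a₁ * a₂ * (a₁ ^ 2 - a₂ ^ 2)) ∧
  ξ₃ = ξ₄ ∧
  ξ₃ = (2 * a₁ * a₂ * (a₁ + a₂) * (γ₁ - γ₂) * β₁ +
      (a₁ - a₂) * (a₂ * γ₁ - a₁ * γ₂) ^ 2 +
      2 * a₁ * a₂ * (a₂ - a₁) * β₁ ^ 2) / (4 * a₁ * a₂ * (a₁ + a₂) ^ 2)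

/-- The subclass L2 is invariant under the restricted Möbius transformations
`u ↦ u/(Cu+D)`, acting on the coefficients of `Q₊` in the standard way. -/
theorem caseL2_moebius_invariant
    (a₁ a₂ α₁ α₂ β₁ β₂ γ₁ γ₂ ξ₁ ξ₂ ξ₃ ξ₄ : ℝ)
    (ha₁ : a₁ ≠ 0) (ha₂ : a₂ ≠ 0) (ha : a₁ ^ 2 ≠ a₂ ^ 2)
    (hcase : CaseL2 a₁ a₂ α₁ α₂ β₁ β₂ γ₁ γ₂ ξ₁ ξ₂ ξ₃ ξ₄)
    (C D : ℝ) (hD : D ≠ 0) :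
    CaseL2
        (D ^ 3 * a₁) (D ^ 3 * a₂)
        (D ^ 2 * (α₁ + C * (a₁ + a₂))) (D ^ 2 * α₂)
        (D ^ 2 * (β₁ + C * (a₁ + a₂))) (D ^ 2 * β₂)
        (D ^ 2 * (γ₁ + 2 * C * a₁)) (D ^ 2 * (γ₂ + 2 * C * a₂))
        (D * ξ₁ + 1 / 2 * C * D *
          (3 * C * (a₁ + a₂) + γ₁ + γ₂ + 2 * (α₁ - α₂ + β₁)))
        (D * ξ₂ + 1 / 2 * C * D *
          (3 * C * (a₁ + a₂) + γ₁ + γ₂ + 2 * (α₁ + α₂ + β₁)))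
        (D * ξ₃ + 1 / 2 * C * D * (C * (a₁ - a₂) + γ₁ - γ₂ + 2 * β₂))
        (D * ξ₄ + 1 / 2 * C * D * (C * (a₁ - a₂) + γ₁ - γ₂ - 2 * β₂)) := by
  obtain ⟨h1, h2, h3, h4, h5, h6, h7, h8⟩ := hcase
  subst h1 h2 h3 h5 h7
  have ha' : a₁ ^ 2 - a₂ ^ 2 ≠ 0 := sub_ne_zero.mpr ha
  have hs : a₁ + a₂ ≠ 0 := fun h => ha (by linear_combination (a₁ - a₂) * h)
  have hden1 : (4 : ℝ) * a₁ * a₂ * (a₁ ^ 2 - a₂ ^ 2) ≠ 0 := by positivity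
  have hden3 : (4 : ℝ) * a₁ * a₂ * (a₁ + a₂) ^ 2 ≠ 0 := by positivity
  have h6' := (eq_div_iff hden1).mp h6
  have h8' := (eq_div_iff hden3).mp h8
  have hden1p : 4 * (D ^ 3 * a₁) * (D ^ 3 * a₂) *
      ((D ^ 3 * a₁) ^ 2 - (D ^ 3 * a₂) ^ 2) ≠ 0 := by
    have : (D ^ 3 * a₁) ^ 2 - (D ^ 3 * a₂) ^ 2 = D ^ 6 * (a₁ ^ 2 - a₂ ^ 2) := by ring
    rw [this]; positivity
  have hden3p : 4 * (D ^ 3 * a₁) * (D ^ 3 * a₂) *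
      (D ^ 3 * a₁ + D ^ 3 * a₂) ^ 2 ≠ 0 := by
    have : D ^ 3 * a₁ + D ^ 3 * a₂ = D ^ 3 * (a₁ + a₂) := by ring
    rw [this]; positivity
  refine ⟨by ring, by ring, by ring, by linear_combination D ^ 11 * h4, by ring, ?_,
    by ring, ?_⟩
  · rw [eq_div_iff hden1p]
    linear_combination D ^ 13 * h6' - 2 * C * D ^ 13 * (a₁ + a₂) * h4
  · rw [eq_div_iff hden3p]
    linear_combination D ^ 13 * h8'
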